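/- arXiv:0801.3826 — 5 statements merged into one kernel-verified Lean document; each statement's English description precedes it below -/
import Mathlib

section
/- An integer matrix A = [a_1,...,a_n] of size d×n is normal (i.e., the columns form a Hilbert basis: every lattice point of the real cone generated by the columns that lies in the lattice generated by the columns is a nonnegative integer combination of the columns) if and only if for every real vector x in the kernel of A there exists an integer vector y in the kernel of A with y_i ≤ ⌈x_i⌉ for all i. -/
open Matrix

lemma castVec_mulVec (d n : ℕ) (A : Matrix (Fin d) (Fin n) ℤ) (v : Fin n → ℤ) :
    (A.map (Int.cast : ℤ → ℝ)).mulVec (fun i => (v i : ℝ)) = fun i => ((A.mulVec v) i : ℝ) := by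
  funext i
  rw [show (fun i => ((v i : ℝ))) = (Int.castRingHom ℝ) ∘ v from rfl]
  exact (RingHom.map_mulVec (Int.castRingHom ℝ) A v i).symm

/-- Proposition 2.1. An integer `d × n` matrix `A` whose columns span `ℝ^d`
is normal (every lattice point of the real cone generated by its columns that lies in the
lattice generated by the columns is a nonnegative integer combination of the columns)
if and only if for every real vector `x ∈ ker A` there is an integer vector `y ∈ ker A`
with `y ≤ ⌈x⌉` componentwise. -/
theorem normal_iff_ceil_kernel_condition (d n : ℕ) (A : Matrix (Fin d) (Fin n) ℤ)
    (hspan : Submodule.span ℝ (Set.range fun j i => (A i j : ℝ)) = ⊤) :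
    (∀ z : Fin d → ℤ,
        (∃ r : Fin n → ℝ, (∀ i, 0 ≤ r i) ∧
          (A.map (Int.cast : ℤ → ℝ)).mulVec r = fun i => (z i : ℝ)) →
        (∃ m : Fin n → ℤ, A.mulVec m = z) →
        ∃ m : Fin n → ℕ, A.mulVec (fun i => (m i : ℤ)) = z)
    ↔
    (∀ x : Fin n → ℝ, (A.map (Int.cast : ℤ → ℝ)).mulVec x = 0 →
        ∃ y : Fin n → ℤ, A.mulVec y = 0 ∧ ∀ i, y i ≤ ⌈x i⌉) := by
  constructor
  · intro h x hx
    set c : Fin n → ℤ := fun i => ⌈x i⌉ with hc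
    set z : Fin d → ℤ := A.mulVec c with hz
    obtain ⟨m, hm⟩ := h z
      ⟨fun i => (c i : ℝ) - x i,
        fun i => by simpa using Int.le_ceil (x i),
        by
          show (A.map _).mulVec ((fun i => (c i : ℝ)) - x) = _
          rw [mulVec_sub, hx, sub_zero, castVec_mulVec]⟩
      ⟨c, rfl⟩
    refine ⟨fun i => c i - m i, ?_, fun i => by simp [hc]⟩
    show A.mulVec (c - fun i => (m i : ℤ)) = 0
    rw [mulVec_sub, hm, hz, sub_self]
  · intro h z ⟨r, hr, hAr⟩ ⟨m, hm⟩
    obtain ⟨y, hy, hyle⟩ := h (fun i => (m i : ℝ) - r i) (by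
      show (A.map _).mulVec ((fun i => (m i : ℝ)) - r) = 0
      rw [mulVec_sub, hAr, castVec_mulVec, hm, sub_self])
    have hym : ∀ i, y i ≤ m i := by
      intro i
      have := hyle i
      have h2 : ⌈(m i : ℝ) - r i⌉ ≤ m i := by
        have : ((m i : ℝ) - r i) ≤ (m i : ℝ) := by linarith [hr i]
        calc ⌈(m i : ℝ) - r i⌉ ≤ ⌈(m i : ℝ)⌉ := Int.ceil_le_ceil this
          _ = m i := Int.ceil_intCast _
      omega
    refine ⟨fun i => (m i - y i).toNat, ?_⟩
    have : (fun i => (((m i - y i).toNat : ℤ))) = fun i => m i - y i := by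
      funext i; exact Int.toNat_of_nonneg (sub_nonneg.2 (hym i))
    rw [this]
    show A.mulVec (m - y) = z
    rw [mulVec_sub, hm, hy, sub_zero]
end

section
/- If A is a normal integer matrix (its columns form a Hilbert basis of the cone they generate), then for every real vector x in ker(A) there exists an integer vector y in ker(A) with y ≤ ⌈x⌉ componentwise. -/
open Matrix

/-- Proposition 2.1, forward direction. If the integer matrix `A` (columns
spanning `ℝ^d`) is normal, then for every real `x ∈ ker A` there is an integer `y ∈ ker A`
with `y ≤ ⌈x⌉` componentwise. -/
theorem normal_implies_ceil_kernel_condition (d n : ℕ) (A : Matrix (Fin d) (Fin n) ℤ)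
    (hspan : Submodule.span ℝ (Set.range fun j i => (A i j : ℝ)) = ⊤)
    (hnormal : ∀ z : Fin d → ℤ,
        (∃ r : Fin n → ℝ, (∀ i, 0 ≤ r i) ∧
          (A.map (Int.cast : ℤ → ℝ)).mulVec r = fun i => (z i : ℝ)) →
        (∃ m : Fin n → ℤ, A.mulVec m = z) →
        ∃ m : Fin n → ℕ, A.mulVec (fun i => (m i : ℤ)) = z) :
    ∀ x : Fin n → ℝ, (A.map (Int.cast : ℤ → ℝ)).mulVec x = 0 →
        ∃ y : Fin n → ℤ, A.mulVec y = 0 ∧ ∀ i, y i ≤ ⌈x i⌉ := by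
  intro x hx
  set z : Fin d → ℤ := A.mulVec (fun i => ⌈x i⌉) with hz
  obtain ⟨m, hm⟩ := hnormal z
    ⟨fun i => (⌈x i⌉ : ℝ) - x i,
      fun i => by have := Int.le_ceil (x i); simp only []; linarith,
      by
        funext i
        have hxi := congrFun hx i
        simp only [mulVec, dotProduct, map_apply, Pi.zero_apply] at hxi ⊢
        rw [hz]
        simp only [mulVec, dotProduct]
        push_cast
        simp [mul_sub, Finset.sum_sub_distrib, hxi]⟩
    ⟨fun i => ⌈x i⌉, rfl⟩
  refine ⟨(fun i => ⌈x i⌉) - fun i => (m i : ℤ), ?_, ?_⟩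
  · rw [Matrix.mulVec_sub, hm, hz, sub_self]
  · intro i
    simp only [Pi.sub_apply]
    omega
end

section
/- Let A be a d×n integer matrix whose columns span R^d. If for every real vector x in ker(A) there exists an integer vector y in ker(A) with y ≤ ⌈x⌉ componentwise, then every integer point z of the real cone C(A) generated by the columns of A is a nonnegative integer combination of the columns (i.e., A is normal). -/
open Matrix

/-- Proposition 2.1, reverse direction. If for every real `x ∈ ker A` there
is an integer `y ∈ ker A` with `y ≤ ⌈x⌉` componentwise, then every integer point `z` of the
real cone `C(A)` (lying in the lattice generated by the columns) is a nonnegative integer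
combination of the columns of `A`, i.e. `A` is normal. -/
theorem ceil_kernel_condition_implies_normal (d n : ℕ) (A : Matrix (Fin d) (Fin n) ℤ)
    (hspan : Submodule.span ℝ (Set.range fun j i => (A i j : ℝ)) = ⊤)
    (hker : ∀ x : Fin n → ℝ, (A.map (Int.cast : ℤ → ℝ)).mulVec x = 0 →
        ∃ y : Fin n → ℤ, A.mulVec y = 0 ∧ ∀ i, y i ≤ ⌈x i⌉) :
    ∀ z : Fin d → ℤ,
      (∃ r : Fin n → ℝ, (∀ i, 0 ≤ r i) ∧
        (A.map (Int.cast : ℤ → ℝ)).mulVec r = fun i => (z i : ℝ)) →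
      (∃ m : Fin n → ℤ, A.mulVec m = z) →
      ∃ m : Fin n → ℕ, A.mulVec (fun i => (m i : ℤ)) = z := by
  rintro z ⟨r, hr0, hr⟩ ⟨m, hm⟩
  have hcast : (A.map (Int.cast : ℤ → ℝ)).mulVec (fun i => (m i : ℝ)) =
      fun i => ((A.mulVec m) i : ℝ) := by
    funext i
    simp [Matrix.mulVec, dotProduct, Matrix.map]
  have hx : (A.map (Int.cast : ℤ → ℝ)).mulVec (fun i => (m i : ℝ) - r i) = 0 := by
    have : (fun i => (m i : ℝ) - r i) = (fun i => (m i : ℝ)) - r := rfl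
    rw [this, Matrix.mulVec_sub, hcast, hm, hr]
    simp
  obtain ⟨y, hy0, hyle⟩ := hker _ hx
  have hle : ∀ i, y i ≤ m i := by
    intro i
    have h1 := hyle i
    have h2 : ⌈(m i : ℝ) - r i⌉ ≤ m i := by
      have : ((m i : ℝ) - r i) ≤ (m i : ℝ) := by linarith [hr0 i]
      calc ⌈(m i : ℝ) - r i⌉ ≤ ⌈(m i : ℝ)⌉ := Int.ceil_le_ceil this
        _ = m i := Int.ceil_intCast _
    omega
  refine ⟨fun i => (m i - y i).toNat, ?_⟩
  have : (fun i => ((m i - y i).toNat : ℤ)) = m - y := by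
    funext i
    have := hle i
    simp [Int.toNat_of_nonneg (by omega : (0:ℤ) ≤ m i - y i)]
  rw [this, Matrix.mulVec_sub, hm, hy0, sub_zero]
end

section
/- Let z be an integer vector in ker(A) ⊆ R^n where A is a d×n integer matrix of rank d whose associated cone C(A) is pointed. Then the set P_z = { x ∈ ker(A) : ⌈x_i⌉ ≥ z_i for all i } equals { x ∈ ker(A) : x_i > z_i − 1 for all i }, and P_z is a bounded subset of ker(A). -/
open Matrix

/-- For `A` a `d × n` integer matrix of rank `d` with pointed cone `C(A)`
and `z` an integer vector in `ker A`, the set `P_z = {x ∈ ker A : ⌈xᵢ⌉ ≥ zᵢ ∀i}` equals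
`{x ∈ ker A : xᵢ > zᵢ - 1 ∀i}`, and this set is bounded. -/
theorem Pz_eq_and_bounded (d n : ℕ) (A : Matrix (Fin d) (Fin n) ℤ)
    (hrank : (A.map (Int.cast : ℤ → ℝ)).rank = d)
    (hpointed : ∃ c : Fin d → ℝ, ∀ j, 0 < ∑ i, c i * (A i j : ℝ))
    (z : Fin n → ℤ) (hz : A.mulVec z = 0) :
    {x : Fin n → ℝ | (A.map (Int.cast : ℤ → ℝ)).mulVec x = 0 ∧ ∀ i, z i ≤ ⌈x i⌉}
      = {x : Fin n → ℝ | (A.map (Int.cast : ℤ → ℝ)).mulVec x = 0 ∧ ∀ i, (z i : ℝ) - 1 < x i}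
    ∧ Bornology.IsBounded
        {x : Fin n → ℝ | (A.map (Int.cast : ℤ → ℝ)).mulVec x = 0 ∧ ∀ i, z i ≤ ⌈x i⌉} := by
  have heq : {x : Fin n → ℝ | (A.map (Int.cast : ℤ → ℝ)).mulVec x = 0 ∧ ∀ i, z i ≤ ⌈x i⌉}
      = {x : Fin n → ℝ | (A.map (Int.cast : ℤ → ℝ)).mulVec x = 0 ∧ ∀ i, (z i : ℝ) - 1 < x i} := by
    ext x
    simp only [Set.mem_setOf_eq, and_congr_right_iff]
    intro _
    exact forall_congr' fun i => Int.le_ceil_iff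
  refine ⟨heq, ?_⟩
  rw [heq]
  obtain ⟨c, hc⟩ := hpointed
  set b : Fin n → ℝ := fun j => ∑ i, c i * (A i j : ℝ) with hb
  set L : Fin n → ℝ := fun j => (z j : ℝ) - 1 with hL
  set S : ℝ := ∑ k, b k * L k with hS
  set M : Fin n → ℝ := fun j => (b j * L j - S) / b j with hM
  have key : ∀ x ∈ {x : Fin n → ℝ | (A.map (Int.cast : ℤ → ℝ)).mulVec x = 0 ∧
      ∀ i, (z i : ℝ) - 1 < x i}, ∑ j, b j * x j = 0 := by
    intro x hx
    have h0 : ∀ i, ∑ j, (A i j : ℝ) * x j = 0 := by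
      intro i
      have := congrFun hx.1 i
      simpa [Matrix.mulVec, dotProduct] using this
    calc ∑ j, b j * x j = ∑ j, ∑ i, c i * ((A i j : ℝ) * x j) := by
          simp [hb, Finset.sum_mul, mul_assoc]
      _ = ∑ i, c i * ∑ j, (A i j : ℝ) * x j := by
          rw [Finset.sum_comm]; simp [Finset.mul_sum]
      _ = 0 := by simp [h0]
  have hsub : {x : Fin n → ℝ | (A.map (Int.cast : ℤ → ℝ)).mulVec x = 0 ∧
      ∀ i, (z i : ℝ) - 1 < x i} ⊆ Set.pi Set.univ (fun j => Set.Icc (L j) (M j)) := by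
    intro x hx
    intro j _
    have hxL : ∀ k, L k ≤ x k := fun k => (hx.2 k).le
    constructor
    · exact hxL j
    · have hsum := key x hx
      have herase : ∑ k ∈ Finset.univ.erase j, b k * L k ≤
          ∑ k ∈ Finset.univ.erase j, b k * x k := by
        apply Finset.sum_le_sum
        intro k _
        exact mul_le_mul_of_nonneg_left (hxL k) (hc k).le
      have hsplit : b j * x j + ∑ k ∈ Finset.univ.erase j, b k * x k = 0 := by
        rw [Finset.add_sum_erase _ (fun k => b k * x k) (Finset.mem_univ j)]
        exact hsum
      have hsplitL : b j * L j + ∑ k ∈ Finset.univ.erase j, b k * L k = S := by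
        rw [hS]
        exact Finset.add_sum_erase _ (fun k => b k * L k) (Finset.mem_univ j)
      have hbx : b j * x j ≤ b j * L j - S := by linarith
      rw [hM]
      rw [le_div_iff₀ (hc j)]
      linarith [hbx]
  exact (Bornology.IsBounded.pi (fun j => Metric.isBounded_Icc (L j) (M j))).subset hsub
end

section
/- Let A be a d×n integer matrix of rank d with pointed cone, and B an n×m integer matrix (m = n − d) whose columns form a lattice basis of ker(A) ∩ Z^n. Set Q_0 = { y ∈ R^m : b_i·y > −1, i = 1,...,n }, where b_i are the rows of B. Then A is normal if and only if Q_0 + Z^m = R^m, i.e., every point of R^m differs from a point of Q_0 by an integer vector. -/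
/-!
Write `x = B p` for a real kernel vector of `A`. Rounding up, `⌈x⌉ - x ≥ 0` shows that `A ⌈x⌉`
lies in `C(A) ∩ ℤA`; normality writes it as `A w` with `w ≥ 0`, and `⌈x⌉ - w = B v` is a lattice
point of the kernel with `x - B v > -1`, i.e. `p - v ∈ Q₀`. Conversely, if `z = A r = A w` with
`r ≥ 0` and `w` integral, then `w - r = B p` is a real kernel vector, and translating `p` into `Q₀`
by `v` gives `w - B v > r - 1 ≥ -1`, so `w - B v` is a natural preimage of `z`.
Both directions need the real kernel of `A` to be `B ℝ^m`: it is spanned by the integral kernel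
because `ℝ` is flat over `ℤ`.
-/

open Matrix TensorProduct

lemma TensorProduct.piScalarRight_tmul_eq_smul {R S τ : Type*} [CommRing R] [CommRing S]
    [Algebra R S] [Fintype τ] [DecidableEq τ] (s : S) (y : τ → R) :
    piScalarRight R S S τ (s ⊗ₜ y) = s • (algebraMap R S ∘ y) := by
  ext j
  simp only [piScalarRight_apply, piScalarRightHom_tmul, Pi.smul_apply, Function.comp_apply,
    smul_eq_mul]
  rw [_root_.Algebra.smul_def, mul_comm]

theorem Matrix.mem_span_algebraMap_ker_of_mulVec_eq_zero {R S ι κ : Type*} [CommRing R]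
    [CommRing S] [Algebra R S] [Module.Flat R S] [Fintype ι] [DecidableEq ι] [Fintype κ]
    [DecidableEq κ] (A : Matrix ι κ R) {x : κ → S} (hx : A.map (algebraMap R S) *ᵥ x = 0) :
    x ∈ Submodule.span S ((algebraMap R S ∘ ·) '' {y | A *ᵥ y = 0}) := by
  let f := AlgebraTensorModule.lTensor S S A.mulVecLin
  have hcomm : ∀ t, piScalarRight R S S ι (f t) =
      A.map (algebraMap R S) *ᵥ piScalarRight R S S κ t := by
    intro t
    induction t using TensorProduct.induction_on with
    | zero => simp
    | tmul s y =>
      simp only [f, AlgebraTensorModule.lTensor_tmul, piScalarRight_tmul_eq_smul, mulVec_smul]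
      congr 1
      ext i
      simpa using RingHom.map_mulVec (algebraMap R S) A y i
    | add t₁ t₂ h₁ h₂ => simp only [map_add, h₁, h₂, mulVec_add]
  obtain ⟨t, rfl⟩ := (piScalarRight R S S κ).surjective x
  have ht : t ∈ LinearMap.ker f := by
    rw [LinearMap.mem_ker, ← (piScalarRight R S S ι).map_eq_zero_iff, hcomm, hx]
  rw [Module.Flat.ker_lTensor_eq] at ht
  obtain ⟨s, rfl⟩ := ht
  clear hx
  induction s using TensorProduct.induction_on with
  | zero => simp
  | tmul s y =>
    rw [AlgebraTensorModule.lTensor_tmul, piScalarRight_tmul_eq_smul]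
    exact Submodule.smul_mem _ _ (Submodule.subset_span ⟨y, y.2, rfl⟩)
  | add t₁ t₂ h₁ h₂ => simpa only [map_add] using Submodule.add_mem _ h₁ h₂

lemma Matrix.map_intCast_mulVec_intCast {α ι κ : Type*} [NonAssocRing α] [Fintype κ]
    (M : Matrix ι κ ℤ) (x : κ → ℤ) :
    M.map (Int.cast : ℤ → α) *ᵥ (fun j => (x j : α)) = fun i => ((M *ᵥ x) i : α) :=
  funext fun i => (RingHom.map_mulVec (Int.castRingHom α) M x i).symm

namespace Matrix

variable {ι κ μ : Type*} [Fintype κ] [Fintype μ]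

/-- `A` is normal: `C(A) ∩ ℤA = ℕA`. -/
def IsNormal (A : Matrix ι κ ℤ) : Prop :=
  ∀ z : ι → ℤ,
    (∃ r : κ → ℝ, (∀ i, 0 ≤ r i) ∧ A.map (Int.cast : ℤ → ℝ) *ᵥ r = fun i => (z i : ℝ)) →
    (∃ w : κ → ℤ, A *ᵥ w = z) → ∃ w : κ → ℕ, A *ᵥ (fun i => (w i : ℤ)) = z

def qZero (B : Matrix κ μ ℤ) : Set (μ → ℝ) :=
  {y | ∀ i, (-1 : ℝ) < (B.map (Int.cast : ℤ → ℝ) *ᵥ y) i}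

variable {A : Matrix ι κ ℤ} {B : Matrix κ μ ℤ}

lemma mul_eq_zero_of_range_mulVec_eq_ker (hB : Set.range (B *ᵥ ·) = {x | A *ᵥ x = 0}) :
    A * B = 0 :=
  ext_iff_mulVec.2 fun v => by
    rw [← mulVec_mulVec, zero_mulVec]
    exact hB.subset ⟨v, rfl⟩

lemma map_intCast_mulVec_map_intCast_mulVec_eq_zero (hB : Set.range (B *ᵥ ·) = {x | A *ᵥ x = 0})
    (p : μ → ℝ) : A.map (Int.cast : ℤ → ℝ) *ᵥ (B.map (Int.cast : ℤ → ℝ) *ᵥ p) = 0 := by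
  have hmap : A.map (Int.cast : ℤ → ℝ) * B.map (Int.cast : ℤ → ℝ) = 0 := by
    simpa [mul_eq_zero_of_range_mulVec_eq_ker hB] using
      (Matrix.map_mul (L := A) (M := B) (f := Int.castRingHom ℝ)).symm
  rw [mulVec_mulVec, hmap, zero_mulVec]

theorem exists_map_intCast_mulVec_eq [Fintype ι] [DecidableEq ι] [DecidableEq κ]
    (hB : Set.range (B *ᵥ ·) = {x | A *ᵥ x = 0}) {x : κ → ℝ}
    (hx : A.map (Int.cast : ℤ → ℝ) *ᵥ x = 0) : ∃ p, B.map (Int.cast : ℤ → ℝ) *ᵥ p = x := by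
  have hspan : Submodule.span ℝ ((algebraMap ℤ ℝ ∘ ·) '' {y | A *ᵥ y = 0}) ≤
      LinearMap.range (B.map (Int.cast : ℤ → ℝ)).mulVecLin := by
    rw [Submodule.span_le]
    rintro _ ⟨y, hy, rfl⟩
    obtain ⟨v, rfl⟩ : y ∈ Set.range (B *ᵥ ·) := hB ▸ hy
    exact ⟨fun j => (v j : ℝ), map_intCast_mulVec_intCast B v⟩
  exact hspan (mem_span_algebraMap_ker_of_mulVec_eq_zero A hx)

theorem covers_of_isNormal (hB : Set.range (B *ᵥ ·) = {x | A *ᵥ x = 0}) (hA : A.IsNormal)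
    (p : μ → ℝ) : ∃ v : μ → ℤ, p - (fun j => (v j : ℝ)) ∈ B.qZero := by
  set x := B.map (Int.cast : ℤ → ℝ) *ᵥ p
  let c : κ → ℤ := fun i => ⌈x i⌉
  obtain ⟨w, hw⟩ := hA (A *ᵥ c)
    ⟨(fun i => (c i : ℝ)) - x, fun i => sub_nonneg.2 (Int.le_ceil _), by
      rw [mulVec_sub, map_intCast_mulVec_intCast, map_intCast_mulVec_map_intCast_mulVec_eq_zero hB,
        sub_zero]⟩
    ⟨c, rfl⟩
  obtain ⟨v, hv⟩ : c - (fun i => (w i : ℤ)) ∈ Set.range (B *ᵥ ·) := by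
    rw [hB, Set.mem_ofPred_eq, mulVec_sub, hw, sub_self]
  refine ⟨v, fun i => ?_⟩
  have hround := Int.ceil_lt_add_one (x i)
  rw [mulVec_sub, map_intCast_mulVec_intCast, show B *ᵥ v = _ from hv]
  simp only [Pi.sub_apply, Int.cast_sub, Int.cast_natCast]
  have : (0 : ℝ) ≤ w i := Nat.cast_nonneg _
  linarith

theorem isNormal_of_covers [Fintype ι] [DecidableEq ι] [DecidableEq κ]
    (hB : Set.range (B *ᵥ ·) = {x | A *ᵥ x = 0})
    (hcov : ∀ p : μ → ℝ, ∃ v : μ → ℤ, p - (fun j => (v j : ℝ)) ∈ B.qZero) :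
    A.IsNormal := by
  rintro z ⟨r, hr₀, hr⟩ ⟨w, rfl⟩
  obtain ⟨p, hp⟩ := exists_map_intCast_mulVec_eq hB (x := (fun i => (w i : ℝ)) - r) (by
    rw [mulVec_sub, map_intCast_mulVec_intCast, hr, sub_self])
  obtain ⟨v, hv⟩ := hcov p
  have hnonneg : ∀ i, 0 ≤ (w - B *ᵥ v) i := by
    intro i
    have hlt := hv i
    rw [mulVec_sub, hp, map_intCast_mulVec_intCast] at hlt
    simp only [Pi.sub_apply] at hlt
    have : (-1 : ℝ) < ((w i - (B *ᵥ v) i : ℤ) : ℝ) := by push_cast; linarith [hr₀ i]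
    have : (-1 : ℤ) < w i - (B *ᵥ v) i := by exact_mod_cast this
    simp only [Pi.sub_apply]
    omega
  refine ⟨fun i => ((w - B *ᵥ v) i).toNat, ?_⟩
  have hBv : A *ᵥ (B *ᵥ v) = 0 := hB.subset ⟨v, rfl⟩
  rw [funext fun i => Int.toNat_of_nonneg (hnonneg i), mulVec_sub, hBv, sub_zero]

end Matrix

theorem normal_iff_Q0_covers_general (d n m : ℕ)
    (A : Matrix (Fin d) (Fin n) ℤ) (B : Matrix (Fin n) (Fin m) ℤ)
    (hBrange : Set.range (fun y : Fin m → ℤ => B.mulVec y)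
      = {x : Fin n → ℤ | A.mulVec x = 0}) :
    (∀ z : Fin d → ℤ,
        (∃ r : Fin n → ℝ, (∀ i, 0 ≤ r i) ∧
          (A.map (Int.cast : ℤ → ℝ)).mulVec r = fun i => (z i : ℝ)) →
        (∃ m' : Fin n → ℤ, A.mulVec m' = z) →
        ∃ m' : Fin n → ℕ, A.mulVec (fun i => (m' i : ℤ)) = z)
    ↔
    (∀ p : Fin m → ℝ, ∃ v : Fin m → ℤ,
        ∀ i, (-1 : ℝ) < (B.map (Int.cast : ℤ → ℝ)).mulVec (p - fun j => (v j : ℝ)) i) :=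
  ⟨Matrix.covers_of_isNormal hBrange, Matrix.isNormal_of_covers hBrange⟩

/-- Theorem 4.2. Let `A` be a `d × n` integer matrix of rank `d` with
pointed cone, and `B` an `n × m` integer matrix (`m = n - d`) whose columns form a lattice
basis of `ker A ∩ ℤ^n`. Then `A` is normal if and only if `Q₀ + ℤ^m = ℝ^m`, where
`Q₀ = {y ∈ ℝ^m : bᵢ·y > -1 ∀i}` and the `bᵢ` are the rows of `B`. -/
theorem normal_iff_Q0_covers (d n m : ℕ) (hm : m = n - d)
    (A : Matrix (Fin d) (Fin n) ℤ) (B : Matrix (Fin n) (Fin m) ℤ)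
    (hrank : (A.map (Int.cast : ℤ → ℝ)).rank = d)
    (hpointed : ∃ c : Fin d → ℝ, ∀ j, 0 < ∑ i, c i * (A i j : ℝ))
    (hBinj : Function.Injective fun y : Fin m → ℤ => B.mulVec y)
    (hBrange : Set.range (fun y : Fin m → ℤ => B.mulVec y)
      = {x : Fin n → ℤ | A.mulVec x = 0}) :
    (∀ z : Fin d → ℤ,
        (∃ r : Fin n → ℝ, (∀ i, 0 ≤ r i) ∧
          (A.map (Int.cast : ℤ → ℝ)).mulVec r = fun i => (z i : ℝ)) →
        (∃ m' : Fin n → ℤ, A.mulVec m' = z) →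
        ∃ m' : Fin n → ℕ, A.mulVec (fun i => (m' i : ℤ)) = z)
    ↔
    (∀ p : Fin m → ℝ, ∃ v : Fin m → ℤ,
        ∀ i, (-1 : ℝ) < (B.map (Int.cast : ℤ → ℝ)).mulVec (p - fun j => (v j : ℝ)) i) :=
  normal_iff_Q0_covers_general d n m A B hBrange
end
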